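/- Let L : L²([0,1]) → L²([0,1]) be a compact, integral-preserving bounded linear operator satisfying the mixing condition (A1). Then: (i) there is exactly one f₀ ∈ L² with L f₀ = f₀ and ∫ f₀ dm = 1; (ii) L contracts V exponentially: there exist C ≥ 0 and λ < 0 such that ‖Lⁿ g‖₂ ≤ C e^{λ n} ‖g‖₂ for every g ∈ V and every n ≥ 0. -/

import Mathlib

/-!
On the closed `L`-invariant subspace `V = ker ∫`, the iterates `Lⁿ` tend to zero pointwise, so by
Banach–Steinhaus they are uniformly bounded, hence equicontinuous. Pointwise convergence of an
equicontinuous family is uniform on the compact set `closure (L '' closedBall 0 1)`, which gives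
`‖(L|_V)ⁿ‖ → 0`. Once `‖(L|_V)ᴺ‖ < 1/2`, submultiplicativity yields the exponential bound, and the
Neumann series `∑ (L|_V)ⁿ` inverts `1 - L|_V`. The fixed point is `1 + h`, where `h ∈ V` solves
`h - L h = L 1 - 1`; it is unique because a fixed point lying in `V` cannot decay.
-/

open MeasureTheory

noncomputable def μ01 : Measure ℝ := volume.restrict (Set.Icc (0 : ℝ) 1)

instance : IsProbabilityMeasure μ01 := ⟨by simp [μ01, Real.volume_Icc]⟩

open Filter Topology Metric Set

section NormedRing

variable {R : Type*} [NormedRing R]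

theorem norm_pow_mul_add_le (a : R) (N q r : ℕ) :
    ‖a ^ (N * q + r)‖ ≤ ‖a ^ N‖ ^ q * ‖a ^ r‖ := by
  induction q with
  | zero => simp
  | succ q ih =>
    calc ‖a ^ (N * (q + 1) + r)‖ = ‖a ^ N * a ^ (N * q + r)‖ := by rw [← pow_add]; ring_nf
      _ ≤ ‖a ^ N‖ * ‖a ^ (N * q + r)‖ := norm_mul_le _ _
      _ ≤ ‖a ^ N‖ * (‖a ^ N‖ ^ q * ‖a ^ r‖) := by gcongr
      _ = ‖a ^ N‖ ^ (q + 1) * ‖a ^ r‖ := by ring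

theorem inv_two_pow_le_two_mul_exp {N : ℕ} (hN : 0 < N) (q r : ℕ) (hr : r < N) :
    (2⁻¹ : ℝ) ^ q ≤ 2 * Real.exp (-Real.log 2 / N * ↑(N * q + r)) := by
  have hN' : (0 : ℝ) < N := by exact_mod_cast hN
  have hexp : Real.exp (-Real.log 2) = 2⁻¹ := by rw [Real.exp_neg, Real.exp_log two_pos]
  have hsplit : -Real.log 2 / N * ↑(N * q + r) = q * -Real.log 2 + -Real.log 2 / N * r := by
    push_cast; field_simp; ring
  have hrem : 2⁻¹ ≤ Real.exp (-Real.log 2 / N * r) := by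
    rw [← hexp, Real.exp_le_exp, div_mul_eq_mul_div, le_div_iff₀ hN', neg_mul, neg_mul,
      neg_le_neg_iff]
    gcongr
  calc (2⁻¹ : ℝ) ^ q = 2 * (2⁻¹ ^ q * 2⁻¹) := by ring
    _ ≤ 2 * (2⁻¹ ^ q * Real.exp (-Real.log 2 / N * r)) := by gcongr
    _ = 2 * Real.exp (-Real.log 2 / N * ↑(N * q + r)) := by
      rw [hsplit, Real.exp_add, Real.exp_nat_mul, hexp]

theorem exists_norm_pow_le_mul_exp_of_tendsto {a : R}
    (h : Tendsto (fun n : ℕ => ‖a ^ n‖) atTop (𝓝 0)) :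
    ∃ C ≥ 0, ∃ lam < 0, ∀ n : ℕ, ‖a ^ n‖ ≤ C * Real.exp (lam * n) := by
  obtain ⟨N, hN, hN0⟩ := ((h.eventually (gt_mem_nhds (inv_pos.mpr two_pos))).and
    (eventually_gt_atTop 0)).exists
  refine ⟨2 * ∑ r ∈ Finset.range N, ‖a ^ r‖, by positivity, -Real.log 2 / N,
    div_neg_of_neg_of_pos (neg_neg_of_pos (Real.log_pos one_lt_two)) (by positivity), fun n => ?_⟩
  obtain ⟨q, r, hr, rfl⟩ : ∃ q r, r < N ∧ N * q + r = n :=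
    ⟨n / N, n % N, Nat.mod_lt n hN0, Nat.div_add_mod n N⟩
  calc ‖a ^ (N * q + r)‖ ≤ ‖a ^ N‖ ^ q * ‖a ^ r‖ := norm_pow_mul_add_le a N q r
    _ ≤ 2⁻¹ ^ q * ∑ r ∈ Finset.range N, ‖a ^ r‖ := by
      gcongr
      exact Finset.single_le_sum (fun i _ => norm_nonneg (a ^ i)) (Finset.mem_range.mpr hr)
    _ ≤ (2 * Real.exp (-Real.log 2 / N * ↑(N * q + r))) * ∑ r ∈ Finset.range N, ‖a ^ r‖ := by
      gcongr
      exact inv_two_pow_le_two_mul_exp hN0 q r hr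
    _ = _ := by ring

theorem summable_pow_of_tendsto_norm_pow [CompleteSpace R] {a : R}
    (h : Tendsto (fun n : ℕ => ‖a ^ n‖) atTop (𝓝 0)) : Summable (a ^ ·) := by
  obtain ⟨C, -, lam, hlam, hbound⟩ := exists_norm_pow_le_mul_exp_of_tendsto h
  refine Summable.of_norm_bounded ((summable_geometric_of_lt_one (Real.exp_nonneg lam)
    (Real.exp_lt_one_iff.mpr hlam)).mul_left C) fun n => ?_
  rw [← Real.exp_nat_mul, mul_comm (n : ℝ) lam]
  exact hbound n

end NormedRing

namespace ContinuousLinearMap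

section NontriviallyNormedField

variable {𝕜 E : Type*} [NontriviallyNormedField 𝕜] [NormedAddCommGroup E] [NormedSpace 𝕜 E]

theorem tendstoUniformlyOn_pow_of_isCompactOperator {T : E →L[𝕜] E} (hT : IsCompactOperator T)
    (hbdd : ∃ C, ∀ n : ℕ, ‖T ^ n‖ ≤ C)
    (hT0 : ∀ x, Tendsto (fun n : ℕ => (T ^ n) x) atTop (𝓝 0)) :
    TendstoUniformlyOn (fun n : ℕ => ⇑(T ^ n)) 0 atTop (closure (T '' closedBall 0 1)) := by
  set K := closure (T '' closedBall 0 1)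
  have heq : Equicontinuous fun n : ℕ => ⇑(T ^ n) :=
    ((NormedSpace.equicontinuous_TFAE fun n : ℕ => T ^ n).out 5 1).mp hbdd
  have hK : IsCompact K := by simpa using hT.isCompact_closure_image_closedBall 1
  have hunif := (EquicontinuousOn.tendsto_uniformOnFun_iff_pi' (𝔖 := {K})
    (forall_eq.mpr hK) (forall_eq.mpr (heq.equicontinuousOn K)) atTop 0).mpr
    (tendsto_pi_nhds.mpr fun x => hT0 x)
  exact UniformOnFun.tendsto_iff_tendstoUniformlyOn.mp hunif K rfl

theorem surjective_one_sub_of_summable_pow {T : E →L[𝕜] E} (h : Summable (T ^ ·)) :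
    Function.Surjective ⇑(1 - T) := fun v =>
  ⟨(∑' n, T ^ n) v, by rw [← mul_apply_eq_comp, h.one_sub_mul_tsum_pow, one_apply_eq_self]⟩

theorem coe_restrict_pow_apply {L : E →L[𝕜] E} {V : Submodule 𝕜 E} (hV : ∀ x ∈ V, L x ∈ V)
    (n : ℕ) (x : V) : ((L.restrict hV ^ n) x : E) = (L ^ n) x := by
  induction n generalizing x with
  | zero => rfl
  | succ n ih =>
    rw [pow_succ, mul_apply_eq_comp, ih, coe_restrict_apply, ← mul_apply_eq_comp, ← pow_succ]

theorem exists_mem_apply_add_eq_self {L : E →L[𝕜] E} {V : Submodule 𝕜 E}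
    (hV : ∀ x ∈ V, L x ∈ V) (hsurj : Function.Surjective ⇑(1 - L.restrict hV)) {u : E}
    (hu : L u - u ∈ V) : ∃ h ∈ V, L (u + h) = u + h := by
  obtain ⟨h, hh⟩ := hsurj ⟨L u - u, hu⟩
  have hh' : (h : E) - L h = L u - u := congrArg Subtype.val hh
  rw [sub_eq_sub_iff_add_eq_add] at hh'
  exact ⟨h, h.2, by rw [map_add, ← hh', add_comm]⟩

theorem eq_zero_of_apply_eq_self_of_tendsto {L : E →L[𝕜] E} {d : E} (hd : L d = d)
    (h : Tendsto (fun n : ℕ => ‖(L ^ n) d‖) atTop (𝓝 0)) : d = 0 := by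
  have hfix : ∀ n : ℕ, (L ^ n) d = d := fun n => by
    rw [FunLike.coe_pow_eq_iterate]
    exact Function.IsFixedPt.iterate hd n
  simp_rw [hfix] at h
  exact norm_eq_zero.mp (tendsto_nhds_unique tendsto_const_nhds h)

end NontriviallyNormedField

section RCLike

variable {𝕜 E : Type*} [RCLike 𝕜] [NormedAddCommGroup E] [NormedSpace 𝕜 E] [CompleteSpace E]

theorem tendsto_norm_pow_of_isCompactOperator {T : E →L[𝕜] E} (hT : IsCompactOperator T)
    (hT0 : ∀ x, Tendsto (fun n : ℕ => (T ^ n) x) atTop (𝓝 0)) :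
    Tendsto (fun n : ℕ => ‖T ^ n‖) atTop (𝓝 0) := by
  have hbdd : ∃ C, ∀ n : ℕ, ‖T ^ n‖ ≤ C := banach_steinhaus fun x => by
    obtain ⟨C, hC⟩ := (hT0 x).norm.bddAbove_range
    exact ⟨C, fun n => hC (mem_range_self n)⟩
  have hunif := tendstoUniformlyOn_pow_of_isCompactOperator hT hbdd hT0
  rw [← tendsto_add_atTop_iff_nat 1]
  refine NormedAddGroup.tendsto_nhds_zero.mpr fun ε hε => ?_
  filter_upwards [Metric.tendstoUniformlyOn_iff.mp hunif (ε / 2) (half_pos hε)] with n hn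
  refine (norm_norm (T ^ (n + 1))).trans_lt <|
    (opNorm_le_of_unit_norm (half_pos hε).le fun x hx => ?_).trans_lt (half_lt_self hε)
  have hTx : T x ∈ closure (T '' closedBall 0 1) :=
    subset_closure (mem_image_of_mem _ (mem_closedBall_zero_iff.mpr hx.le))
  simpa [pow_succ, dist_eq_norm] using (hn _ hTx).le

theorem exists_norm_pow_le_mul_exp_of_isCompactOperator {T : E →L[𝕜] E}
    (hT : IsCompactOperator T) (hT0 : ∀ x, Tendsto (fun n : ℕ => (T ^ n) x) atTop (𝓝 0)) :
    ∃ C ≥ 0, ∃ lam < 0, ∀ n : ℕ, ‖T ^ n‖ ≤ C * Real.exp (lam * n) :=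
  exists_norm_pow_le_mul_exp_of_tendsto (tendsto_norm_pow_of_isCompactOperator hT hT0)

theorem surjective_one_sub_of_isCompactOperator {T : E →L[𝕜] E}
    (hT : IsCompactOperator T) (hT0 : ∀ x, Tendsto (fun n : ℕ => (T ^ n) x) atTop (𝓝 0)) :
    Function.Surjective ⇑(1 - T) :=
  surjective_one_sub_of_summable_pow
    (summable_pow_of_tendsto_norm_pow (tendsto_norm_pow_of_isCompactOperator hT hT0))

end RCLike

end ContinuousLinearMap

namespace MeasureTheory.L2

variable {α : Type*} [MeasurableSpace α] (μ : Measure α) [IsFiniteMeasure μ]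

noncomputable def integralCLM : Lp ℝ 2 μ →L[ℝ] ℝ := innerSL ℝ (Lp.const 2 μ 1)

variable {μ}

theorem integralCLM_apply (f : Lp ℝ 2 μ) : integralCLM μ f = ∫ x, f x ∂μ := by
  rw [integralCLM, innerSL_apply_apply, ← indicatorConstLp_univ, inner_indicatorConstLp_one,
    Measure.restrict_univ]

theorem mem_ker_integralCLM {f : Lp ℝ 2 μ} : f ∈ (integralCLM μ).ker ↔ ∫ x, f x ∂μ = 0 := by
  rw [LinearMap.mem_ker, ContinuousLinearMap.coe_coe, integralCLM_apply]

theorem integralCLM_const (c : ℝ) : integralCLM μ (Lp.const 2 μ c) = μ.real univ * c := by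
  rw [integralCLM_apply, integral_congr_ae (Lp.coeFn_const 2 μ c)]
  simp

end MeasureTheory.L2

open L2 ContinuousLinearMap

theorem mixing_unique_fixed_point_and_exponential_contraction
    (L : Lp ℝ 2 μ01 →L[ℝ] Lp ℝ 2 μ01)
    (hcomp : IsCompactOperator L)
    (hint : ∀ g : Lp ℝ 2 μ01, ∫ x, (L g) x ∂μ01 = ∫ x, g x ∂μ01)
    (hmix : ∀ g : Lp ℝ 2 μ01, (∫ x, g x ∂μ01) = 0 →
      Filter.Tendsto (fun n : ℕ => ‖(L ^ n) g‖) Filter.atTop (nhds 0)) :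
    (∃! f₀ : Lp ℝ 2 μ01, L f₀ = f₀ ∧ ∫ x, f₀ x ∂μ01 = 1) ∧
    (∃ C : ℝ, 0 ≤ C ∧ ∃ lam : ℝ, lam < 0 ∧
      ∀ g : Lp ℝ 2 μ01, (∫ x, g x ∂μ01) = 0 →
        ∀ n : ℕ, ‖(L ^ n) g‖ ≤ C * Real.exp (lam * n) * ‖g‖) := by
  have hI : ∀ g, integralCLM μ01 (L g) = integralCLM μ01 g := fun g => by
    simp only [integralCLM_apply, hint]
  have hV : ∀ g ∈ (integralCLM μ01).ker, L g ∈ (integralCLM μ01).ker := fun g hg =>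
    mem_ker_integralCLM.mpr ((hint g).trans (mem_ker_integralCLM.mp hg))
  have hcompV : IsCompactOperator (L.restrict hV) :=
    IsCompactOperator.restrict (f := (L : Lp ℝ 2 μ01 →ₗ[ℝ] Lp ℝ 2 μ01)) hcomp hV
      (integralCLM μ01).isClosed_ker
  have hmixV : ∀ g, Tendsto (fun n : ℕ => (L.restrict hV ^ n) g) atTop (𝓝 0) := fun g => by
    rw [tendsto_zero_iff_norm_tendsto_zero]
    simpa only [Submodule.coe_norm, coe_restrict_pow_apply] using
      hmix g (mem_ker_integralCLM.mp g.2)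
  obtain ⟨C, hC, lam, hlam, hbound⟩ := exists_norm_pow_le_mul_exp_of_isCompactOperator hcompV hmixV
  refine ⟨?_, C, hC, lam, hlam, fun g hg n => ?_⟩
  · set u := Lp.const 2 μ01 (1 : ℝ)
    have hu : integralCLM μ01 u = 1 := by simp [u, integralCLM_const]
    obtain ⟨h, hhV, hfix⟩ := exists_mem_apply_add_eq_self hV
      (surjective_one_sub_of_isCompactOperator hcompV hmixV) (u := u)
      (LinearMap.mem_ker.mpr (by simp only [coe_coe, map_sub, hI, sub_self]))
    have hh : integralCLM μ01 h = 0 := LinearMap.mem_ker.mp hhV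
    have hf₀ : integralCLM μ01 (u + h) = 1 := by rw [map_add, hu, hh, add_zero]
    refine ⟨u + h, ⟨hfix, integralCLM_apply (u + h) ▸ hf₀⟩, fun y ⟨hy, hy1⟩ => ?_⟩
    refine sub_eq_zero.mp (eq_zero_of_apply_eq_self_of_tendsto (by rw [map_sub, hy, hfix])
      (hmix _ ?_))
    rw [← integralCLM_apply, map_sub, hf₀, integralCLM_apply, hy1, sub_self]
  · calc ‖(L ^ n) g‖ = ‖(L.restrict hV ^ n) ⟨g, mem_ker_integralCLM.mpr hg⟩‖ := by
          rw [Submodule.coe_norm, coe_restrict_pow_apply]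
      _ ≤ ‖L.restrict hV ^ n‖ * ‖g‖ := le_opNorm _ _
      _ ≤ C * Real.exp (lam * n) * ‖g‖ := by gcongr; exact hbound n
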